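/- Let n ≥ 1, let F : ℝ^{4n} → ℝ and φ : ℝ → ℝ be smooth, and set f = φ ∘ F. Then for every x ∈ ℝ^{4n} and every vector Z ∈ ℝ^{4n}: P_f(x)(Z) = φ'(F(x))·P_F(x)(Z) + φ'''(F(x))·|∇F(x)|²·⟨∇F(x), Z⟩ + 2φ''(F(x))·D²F(x)[Z, ∇F(x)] + φ''(F(x))·ΔF(x)·⟨∇F(x), Z⟩ + φ''(F(x))·Σ_{s=1}^{3} ( Σ_{a=1}^{4n} D²F(x)[e_a, I_s e_a] )·⟨∇F(x), I_s Z⟩. -/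

import Mathlib

open scoped RealInnerProductSpace

noncomputable section

/-- `ℝ^{4n}` identified with `ℍⁿ`: the `4n` real coordinates are indexed by pairs
`(a, t)` where `a` numbers the quaternionic component and `t ∈ {0,1,2,3}` the
real coordinates `1, i, j, k` of that quaternion. -/
abbrev Qn (n : ℕ) := EuclideanSpace ℝ (Fin n × Fin 4)

/-- The three almost complex structures `I₁, I₂, I₃` on `ℝ^{4n} = ℍⁿ`, given by
componentwise left multiplication by the quaternion units `i, j, k`. -/
def Iop (n : ℕ) (s : Fin 3) (x : Qn n) : Qn n := WithLp.toLp 2 fun (p : Fin n × Fin 4) =>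
  ![ ![ -x (p.1, 1),  x (p.1, 0), -x (p.1, 3),  x (p.1, 2) ],
     ![ -x (p.1, 2),  x (p.1, 3),  x (p.1, 0), -x (p.1, 1) ],
     ![ -x (p.1, 3), -x (p.1, 2),  x (p.1, 1),  x (p.1, 0) ] ] s p.2

/-- The standard orthonormal basis of `ℝ^{4n}`. -/
def eQ (n : ℕ) (p : Fin n × Fin 4) : Qn n := EuclideanSpace.single p 1

/-- Second Fréchet derivative as a bilinear form. -/
def D2Q (n : ℕ) (g : Qn n → ℝ) (x X Y : Qn n) : ℝ := iteratedFDeriv ℝ 2 g x ![X, Y]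

/-- Third Fréchet derivative as a trilinear form. -/
def D3Q (n : ℕ) (g : Qn n → ℝ) (x Z X Y : Qn n) : ℝ := iteratedFDeriv ℝ 3 g x ![Z, X, Y]

/-- The Laplacian `Δg(x) = Σ_a D²g(x)[e_a, e_a]`. -/
def lapQ (n : ℕ) (g : Qn n → ℝ) (x : Qn n) : ℝ := ∑ p, D2Q n g x (eQ n p) (eQ n p)

/-- The flat quaternionic P-form
`P_g(x)(Z) = Σ_b D³g(x)[Z,e_b,e_b] + Σ_{s=1}^3 Σ_b D³g(x)[I_s Z, e_b, I_s e_b]`. -/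
def PQ (n : ℕ) (g : Qn n → ℝ) (x Z : Qn n) : ℝ :=
  (∑ b, D3Q n g x Z (eQ n b) (eQ n b)) +
    ∑ s : Fin 3, ∑ b, D3Q n g x (Iop n s Z) (eQ n b) (Iop n s (eQ n b))

/-! By Faà di Bruno to third order, `D³(φ ∘ F)[A, B, C]` is `φ''' DF[A] DF[B] DF[C]`, plus `φ''`
times the three products of `D²F` with `DF`, plus `φ' D³F[A, B, C]`. Tracing the last two slots
against an orthonormal basis `(e_b)`, the factors `DF[e_b] = ⟪∇F, e_b⟫` reassemble `∇F`: the plain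
trace yields `|∇F|²` and `2 D²F[Z, ∇F]`, while in the traces twisted by `I_s` these terms vanish,
since `I_s` is skew-adjoint (so `⟪∇F, I_s ∇F⟫ = 0` and the two mixed `D²F` terms cancel). -/

section ThirdDerivativeOfComp

variable {E : Type*} [NormedAddCommGroup E] [NormedSpace ℝ E]

lemma ContDiff.fderiv_apply_const {k : ℕ} {g : E → ℝ} (hg : ContDiff ℝ (k + 1) g) (W : E) :
    ContDiff ℝ k (fun y => fderiv ℝ g y W) :=
  (hg.fderiv_right le_rfl).clm_apply contDiff_const

lemma iteratedFDeriv_two_apply_vecCons (g : E → ℝ) (x X Y : E) :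
    iteratedFDeriv ℝ 2 g x ![X, Y] = fderiv ℝ (fderiv ℝ g) x X Y :=
  iteratedFDeriv_two_apply g x _

lemma iteratedFDeriv_two_apply_eq_fderiv_fderiv {g : E → ℝ} (hg : ContDiff ℝ 2 g) (x X Y : E) :
    iteratedFDeriv ℝ 2 g x ![X, Y] = fderiv ℝ (fun y => fderiv ℝ g y Y) x X := by
  have hg' : DifferentiableAt ℝ (fderiv ℝ g) x :=
    (hg.fderiv_right (m := 1) le_rfl).differentiable one_ne_zero x
  rw [iteratedFDeriv_two_apply_vecCons, fderiv_clm_apply hg' (differentiableAt_const Y)]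
  simp

lemma iteratedFDeriv_three_apply_eq_fderiv_fderiv_fderiv {g : E → ℝ} (hg : ContDiff ℝ 3 g)
    (x A B C : E) :
    iteratedFDeriv ℝ 3 g x ![A, B, C] =
      fderiv ℝ (fun y => fderiv ℝ (fun z => fderiv ℝ g z C) y B) x A := by
  have hg2 : DifferentiableAt ℝ (iteratedFDeriv ℝ 2 g) x :=
    (hg.iteratedFDeriv_right (i := 2) (m := 1) le_rfl).differentiable one_ne_zero x
  rw [iteratedFDeriv_succ_apply_left, Matrix.cons_val_zero,
    show Fin.tail ![A, B, C] = ![B, C] from rfl,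
    ← fderiv_continuousMultilinear_apply_const_apply hg2]
  congr 2 with y
  exact iteratedFDeriv_two_apply_eq_fderiv_fderiv (hg.of_le (by norm_num)) y B C

lemma fderiv_comp_apply_eq_deriv_mul {ψ : ℝ → ℝ} {F : E → ℝ} {y : E}
    (hψ : DifferentiableAt ℝ ψ (F y)) (hF : DifferentiableAt ℝ F y) (W : E) :
    fderiv ℝ (ψ ∘ F) y W = deriv ψ (F y) * fderiv ℝ F y W := by
  rw [(hψ.hasDerivAt.comp_hasFDerivAt y hF.hasFDerivAt).fderiv]
  rfl

lemma fderiv_comp_mul_apply {ψ : ℝ → ℝ} {F u : E → ℝ} {y : E}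
    (hψ : DifferentiableAt ℝ ψ (F y)) (hF : DifferentiableAt ℝ F y) (hu : DifferentiableAt ℝ u y)
    (W : E) :
    fderiv ℝ (fun z => ψ (F z) * u z) y W =
      deriv ψ (F y) * fderiv ℝ F y W * u y + ψ (F y) * fderiv ℝ u y W := by
  rw [fderiv_fun_mul (c := fun z => ψ (F z)) (hψ.comp y hF) hu]
  simp only [add_apply, smul_apply, smul_eq_mul]
  rw [← Function.comp_def, fderiv_comp_apply_eq_deriv_mul hψ hF]
  ring

lemma iteratedFDeriv_three_comp_apply {φ : ℝ → ℝ} {F : E → ℝ} (hφ : ContDiff ℝ 3 φ)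
    (hF : ContDiff ℝ 3 F) (x A B C : E) :
    iteratedFDeriv ℝ 3 (φ ∘ F) x ![A, B, C] =
      deriv^[3] φ (F x) * (fderiv ℝ F x A * fderiv ℝ F x B * fderiv ℝ F x C)
      + deriv^[2] φ (F x) * (iteratedFDeriv ℝ 2 F x ![A, B] * fderiv ℝ F x C
          + iteratedFDeriv ℝ 2 F x ![A, C] * fderiv ℝ F x B
          + fderiv ℝ F x A * iteratedFDeriv ℝ 2 F x ![B, C])
      + deriv φ (F x) * iteratedFDeriv ℝ 3 F x ![A, B, C] := by
  have hφ1 : Differentiable ℝ (deriv φ) := (hφ.iterate_deriv' 2 1).differentiable (by norm_num)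
  have hφ2 : Differentiable ℝ (deriv (deriv φ)) :=
    (hφ.iterate_deriv' 1 2).differentiable one_ne_zero
  have hF1 : Differentiable ℝ F := hF.differentiable (by norm_num)
  set u := fun y => fderiv ℝ F y C
  set v := fun y => fderiv ℝ F y B
  set w := fun y => fderiv ℝ u y B
  have hu : ContDiff ℝ 2 u := hF.fderiv_apply_const C
  have hv : ContDiff ℝ 2 v := hF.fderiv_apply_const B
  have hw : Differentiable ℝ w := (hu.fderiv_apply_const B).differentiable one_ne_zero
  have hvu : DifferentiableAt ℝ (fun y => v y * u y) x :=
    ((hv.mul hu).differentiable (by norm_num)) x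
  have hC : (fun z => fderiv ℝ (φ ∘ F) z C) = fun z => deriv φ (F z) * u z :=
    funext fun z => fderiv_comp_apply_eq_deriv_mul
      ((hφ.differentiable (by norm_num)) _) (hF1 z) C
  have hBC : (fun y => fderiv ℝ (fun z => deriv φ (F z) * u z) y B) =
      fun y => deriv (deriv φ) (F y) * (v y * u y) + deriv φ (F y) * w y := by
    funext y
    rw [fderiv_comp_mul_apply (hφ1 _) (hF1 y) ((hu.differentiable (by norm_num)) y)]
    ring
  rw [iteratedFDeriv_three_apply_eq_fderiv_fderiv_fderiv (hφ.comp hF), hC, hBC,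
    fderiv_fun_add (f := fun y => deriv (deriv φ) (F y) * (v y * u y))
      (g := fun y => deriv φ (F y) * w y) (((hφ2 _).comp x (hF1 x)).mul hvu)
      (((hφ1 _).comp x (hF1 x)).mul (hw x)),
    add_apply, fderiv_comp_mul_apply (hφ2 _) (hF1 x) hvu,
    fderiv_comp_mul_apply (hφ1 _) (hF1 x) (hw x),
    fderiv_fun_mul ((hv.differentiable (by norm_num)) x) ((hu.differentiable (by norm_num)) x),
    iteratedFDeriv_three_apply_eq_fderiv_fderiv_fderiv hF,
    iteratedFDeriv_two_apply_eq_fderiv_fderiv (hF.of_le (by norm_num)),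
    iteratedFDeriv_two_apply_eq_fderiv_fderiv (hF.of_le (by norm_num)),
    iteratedFDeriv_two_apply_eq_fderiv_fderiv (hF.of_le (by norm_num))]
  simp only [add_apply, smul_apply, smul_eq_mul, Function.iterate_succ_apply',
    Function.iterate_zero_apply]
  ring

end ThirdDerivativeOfComp

section OrthonormalBasis

variable {ι E : Type*} [Fintype ι] [NormedAddCommGroup E] [InnerProductSpace ℝ E]
  (b : OrthonormalBasis ι ℝ E)

lemma OrthonormalBasis.sum_inner_mul_apply {L : Type*} [FunLike L E ℝ] [LinearMapClass L ℝ E ℝ]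
    (a : E) (β : L) : ∑ i, ⟪a, b i⟫ * β (b i) = β a := by
  conv_rhs => rw [← b.sum_repr' a]
  simp [real_inner_comm]

lemma OrthonormalBasis.sum_inner_mul_apply_skew {L : Type*} [FunLike L E ℝ]
    [LinearMapClass L ℝ E ℝ] (T : E →ₗ[ℝ] E) (hT : ∀ u v, ⟪T u, v⟫ = -⟪u, T v⟫) (a : E) (β : L) :
    ∑ i, (⟪a, T (b i)⟫ * β (b i) + ⟪a, b i⟫ * β (T (b i))) = 0 := by
  have hTa : ∀ i, ⟪a, T (b i)⟫ = -⟪T a, b i⟫ := fun i => by rw [hT, neg_neg]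
  have hβT : ∑ i, ⟪a, b i⟫ * β (T (b i)) = β (T a) :=
    b.sum_inner_mul_apply a ((β : E →ₗ[ℝ] ℝ) ∘ₗ T)
  simp only [hTa, neg_mul, Finset.sum_add_distrib, Finset.sum_neg_distrib, b.sum_inner_mul_apply,
    hβT, neg_add_cancel]

end OrthonormalBasis

section TracedThirdDerivative

variable {ι E : Type*} [Fintype ι] [NormedAddCommGroup E] [InnerProductSpace ℝ E] [CompleteSpace E]
  (b : OrthonormalBasis ι ℝ E) {φ : ℝ → ℝ} {F : E → ℝ}

lemma sum_iteratedFDeriv_three_comp (hφ : ContDiff ℝ 3 φ) (hF : ContDiff ℝ 3 F) (T : E → E)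
    (x W : E) :
    ∑ i, iteratedFDeriv ℝ 3 (φ ∘ F) x ![W, b i, T (b i)] =
      deriv^[3] φ (F x) * ⟪gradient F x, W⟫ * ∑ i, ⟪gradient F x, b i⟫ * ⟪gradient F x, T (b i)⟫
      + deriv^[2] φ (F x) * ∑ i, (⟪gradient F x, T (b i)⟫ * fderiv ℝ (fderiv ℝ F) x W (b i)
          + ⟪gradient F x, b i⟫ * fderiv ℝ (fderiv ℝ F) x W (T (b i)))
      + deriv^[2] φ (F x) * ⟪gradient F x, W⟫ * ∑ i, iteratedFDeriv ℝ 2 F x ![b i, T (b i)]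
      + deriv φ (F x) * ∑ i, iteratedFDeriv ℝ 3 F x ![W, b i, T (b i)] := by
  simp only [Finset.mul_sum, ← Finset.sum_add_distrib]
  refine Finset.sum_congr rfl fun i _ => ?_
  rw [iteratedFDeriv_three_comp_apply hφ hF, iteratedFDeriv_two_apply_vecCons,
    iteratedFDeriv_two_apply_vecCons]
  simp only [inner_gradient_left]
  ring

lemma sum_iteratedFDeriv_three_comp_diag (hφ : ContDiff ℝ 3 φ) (hF : ContDiff ℝ 3 F) (x W : E) :
    ∑ i, iteratedFDeriv ℝ 3 (φ ∘ F) x ![W, b i, b i] =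
      deriv^[3] φ (F x) * ‖gradient F x‖ ^ 2 * ⟪gradient F x, W⟫
      + 2 * deriv^[2] φ (F x) * iteratedFDeriv ℝ 2 F x ![W, gradient F x]
      + deriv^[2] φ (F x) * (∑ i, iteratedFDeriv ℝ 2 F x ![b i, b i]) * ⟪gradient F x, W⟫
      + deriv φ (F x) * ∑ i, iteratedFDeriv ℝ 3 F x ![W, b i, b i] := by
  have hsq : ∑ i, ⟪gradient F x, b i⟫ * ⟪gradient F x, b i⟫ = ‖gradient F x‖ ^ 2 := by
    rw [← real_inner_self_eq_norm_sq]
    exact b.sum_inner_mul_apply _ (innerSL ℝ (gradient F x))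
  have hmixed : ∑ i, (⟪gradient F x, b i⟫ * fderiv ℝ (fderiv ℝ F) x W (b i)
      + ⟪gradient F x, b i⟫ * fderiv ℝ (fderiv ℝ F) x W (b i)) =
      2 * iteratedFDeriv ℝ 2 F x ![W, gradient F x] := by
    rw [iteratedFDeriv_two_apply_vecCons, Finset.sum_add_distrib,
      ← b.sum_inner_mul_apply (gradient F x) (fderiv ℝ (fderiv ℝ F) x W)]
    ring
  refine (sum_iteratedFDeriv_three_comp b hφ hF id x W).trans ?_
  simp only [id, hsq, hmixed]
  ring

lemma sum_iteratedFDeriv_three_comp_skew (hφ : ContDiff ℝ 3 φ) (hF : ContDiff ℝ 3 F)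
    (T : E →ₗ[ℝ] E) (hT : ∀ u v, ⟪T u, v⟫ = -⟪u, T v⟫) (x W : E) :
    ∑ i, iteratedFDeriv ℝ 3 (φ ∘ F) x ![W, b i, T (b i)] =
      deriv^[2] φ (F x) * (∑ i, iteratedFDeriv ℝ 2 F x ![b i, T (b i)]) * ⟪gradient F x, W⟫
      + deriv φ (F x) * ∑ i, iteratedFDeriv ℝ 3 F x ![W, b i, T (b i)] := by
  have hsq : ∑ i, ⟪gradient F x, b i⟫ * ⟪gradient F x, T (b i)⟫ = 0 := by
    have h := b.sum_inner_mul_apply_skew T hT (gradient F x) (innerSL ℝ (gradient F x))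
    simp only [innerSL_apply_apply, Finset.sum_add_distrib, mul_comm ⟪gradient F x, T _⟫] at h
    linarith
  rw [sum_iteratedFDeriv_three_comp b hφ hF T,
    b.sum_inner_mul_apply_skew T hT (gradient F x) (fderiv ℝ (fderiv ℝ F) x W), hsq]
  ring

end TracedThirdDerivative

section Quaternionic

variable {n : ℕ}

def IopLinear (n : ℕ) (s : Fin 3) : Qn n →ₗ[ℝ] Qn n where
  toFun := Iop n s
  map_add' x y := by
    ext ⟨a, t⟩
    fin_cases s <;> fin_cases t <;> simp [Iop] <;> ring
  map_smul' c x := by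
    ext ⟨a, t⟩
    fin_cases s <;> fin_cases t <;> simp [Iop]

lemma coe_IopLinear (s : Fin 3) : ⇑(IopLinear n s) = Iop n s := rfl

lemma inner_Iop_left (s : Fin 3) (u v : Qn n) : ⟪Iop n s u, v⟫ = -⟪u, Iop n s v⟫ := by
  rw [eq_neg_iff_add_eq_zero]
  simp only [PiLp.inner_apply, RCLike.inner_apply, conj_trivial, ← Finset.sum_add_distrib,
    Fintype.sum_prod_type]
  refine Finset.sum_eq_zero fun a _ => ?_
  fin_cases s <;> simp [Fin.sum_univ_four, Iop] <;> ring

lemma eQ_eq_basisFun : eQ n = EuclideanSpace.basisFun (Fin n × Fin 4) ℝ := by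
  funext p
  simp [eQ]

end Quaternionic

theorem qc_P_form_chain_rule (n : ℕ) (F : Qn n → ℝ) (φ : ℝ → ℝ)
    (hF : ContDiff ℝ (⊤ : ℕ∞) F) (hφ : ContDiff ℝ (⊤ : ℕ∞) φ)
    (f : Qn n → ℝ) (hf : f = φ ∘ F) (x Z : Qn n) :
    PQ n f x Z =
      deriv φ (F x) * PQ n F x Z
      + deriv^[3] φ (F x) * ‖gradient F x‖ ^ 2 * ⟪gradient F x, Z⟫
      + 2 * deriv^[2] φ (F x) * D2Q n F x Z (gradient F x)
      + deriv^[2] φ (F x) * lapQ n F x * ⟪gradient F x, Z⟫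
      + deriv^[2] φ (F x) *
          ∑ s : Fin 3, (∑ a, D2Q n F x (eQ n a) (Iop n s (eQ n a))) *
            ⟪gradient F x, Iop n s Z⟫ := by
  subst hf
  have hF3 : ContDiff ℝ 3 F := hF.of_le (WithTop.coe_le_coe.mpr le_top)
  have hφ3 : ContDiff ℝ 3 φ := hφ.of_le (WithTop.coe_le_coe.mpr le_top)
  simp only [PQ, lapQ, D2Q, D3Q, eQ_eq_basisFun, ← coe_IopLinear]
  rw [sum_iteratedFDeriv_three_comp_diag _ hφ3 hF3, Finset.sum_congr rfl fun s _ =>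
    sum_iteratedFDeriv_three_comp_skew _ hφ3 hF3 (IopLinear n s) (inner_Iop_left s) x _]
  simp only [Finset.sum_add_distrib, mul_assoc, ← Finset.mul_sum]
  ring
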